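/- Let r ≥ 2, s ≥ 2 with s even and k = rs/2 (so 2k = rs). If r(10k+1) = s(17k+2), then r ≡ 0 (mod 4). Equivalently, if r ≢ 0 (mod 4), then r(10k+1) ≠ s(17k+2). -/
import Mathlib


theorem paper_stmt (r s k : ℤ) (hr : 2 ≤ r) (hs : 2 ≤ s) (hse : Even s)
    (hk : 2*k = r*s) (h : r*(10*k + 1) = s*(17*k + 2)) :
    r % 4 = 0 := by
  obtain ⟨t, hts⟩ := hse
  subst hts
  have key : 2*r = 8*t + 4*(r*t*(17*t - 5*r)) := by
    linear_combination 2*h + (17*(t+t) - 10*r)*hk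
  set m := r*t*(17*t - 5*r) with hm
  have hre : r = 2*(2*t + m) := by omega
  set u := 2*t + m with hu
  have hmn : m = 2*(u*t*(17*t - 10*u)) := by rw [hm, hre]; ring
  set n := u*t*(17*t - 10*u) with hn
  omega
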